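/- Continuity of entropy under energy constraint (Winter): let H̄ be a self-adjoint operator on a separable Hilbert space with tr(e^{−βH̄}) < ∞ for all β > 0. Then for every E > 0 there is a function ε ↦ εC(ε,H̄,E) + h(ε) tending to 0 as ε → 0 such that any two density operators ρ, σ with tr(ρH̄) ≤ E, tr(σH̄) ≤ E and ‖ρ − σ‖_1 ≤ ε satisfy |S(ρ) − S(σ)| ≤ εC(ε,H̄,E) + h(ε). -/

import Mathlib

/-!
With `η x = -x log x`, the entropy is `∑ η (p n)`, and Gibbs' inequality
`η d ≤ c - d - d log c` (for `c > 0`) controls it at both ends of the spectrum.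
On a finite set `F` of levels, `|η a - η b| ≤ η |a - b| + |a - b|` together with
`c = ε / (#F + 1)` bounds the difference of the partial entropies by
`ε (1 + log (#F + 1)) + η ε`. Off `F`, the choice `c = exp (-β E n)` bounds the entropy of every
state of mean energy at most `E` by `∑_{n ∉ F} exp (-β E n) + β (E - m)`, where `m ≤ 0` bounds the
levels from below; the Gibbs hypothesis makes this small for small `β` and large `F`. So the
entropy is uniformly continuous on the energy-bounded states, and `ε C ε` can be taken to be its
modulus of continuity.
-/

/-- Binary entropy (base 2), `h(ε) = −ε·log₂ε − (1−ε)·log₂(1−ε)`. -/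
noncomputable def binH (ε : ℝ) : ℝ :=
  -ε * Real.logb 2 ε - (1 - ε) * Real.logb 2 (1 - ε)

open Real Filter Topology Finset

namespace Real

lemma negMulLog_le_sub_sub_mul_log {d c : ℝ} (hd : 0 ≤ d) (hc : 0 < c) :
    negMulLog d ≤ c - d - d * log c := by
  have hdc := negMulLog_le_one_sub_self (div_nonneg hd hc.le)
  calc negMulLog d = d / c * negMulLog c + c * negMulLog (d / c) := by
        rw [← negMulLog_mul, mul_div_cancel₀ d hc.ne']
    _ ≤ d / c * negMulLog c + c * (1 - d / c) := by gcongr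
    _ = c - d - d * log c := by rw [negMulLog]; field_simp; ring

lemma mul_log_le_mul_log_add {a b : ℝ} (ha : 0 ≤ a) (hb : 0 ≤ b) :
    a * log a ≤ a * log (a + b) := by
  rcases ha.eq_or_lt with rfl | ha
  · simp
  · exact mul_le_mul_of_nonneg_left (log_le_log ha (by linarith)) ha.le

lemma negMulLog_add_le {a b : ℝ} (ha : 0 ≤ a) (hb : 0 ≤ b) :
    negMulLog (a + b) ≤ negMulLog a + negMulLog b := by
  have h₁ := mul_log_le_mul_log_add ha hb
  have h₂ := mul_log_le_mul_log_add hb ha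
  rw [add_comm b] at h₂
  simp only [negMulLog]
  linarith

lemma negMulLog_le_negMulLog_add_add {a b : ℝ} (ha : 0 ≤ a) (hb : 0 ≤ b) (hab : a + b ≤ 1) :
    negMulLog a ≤ negMulLog (a + b) + b := by
  rcases (add_nonneg ha hb).eq_or_lt with hab0 | hab0
  · obtain rfl : a = 0 := by linarith
    simpa using add_nonneg (negMulLog_nonneg hb (by linarith)) hb
  have hgibbs := negMulLog_le_sub_sub_mul_log ha hab0
  have hlog : log (a + b) ≤ 0 := log_nonpos hab0.le hab
  have : b * log (a + b) ≤ 0 := mul_nonpos_of_nonneg_of_nonpos hb hlog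
  simp only [negMulLog] at hgibbs ⊢
  linarith

lemma abs_negMulLog_add_sub_le {a b : ℝ} (ha : 0 ≤ a) (hb : 0 ≤ b) (hab : a + b ≤ 1) :
    |negMulLog (a + b) - negMulLog a| ≤ negMulLog b + b :=
  abs_sub_le_iff.2 ⟨by linarith [negMulLog_add_le ha hb],
    by linarith [negMulLog_le_negMulLog_add_add ha hb hab, negMulLog_nonneg hb (by linarith)]⟩

lemma abs_negMulLog_sub_le {a b : ℝ} (ha₀ : 0 ≤ a) (ha₁ : a ≤ 1) (hb₀ : 0 ≤ b) (hb₁ : b ≤ 1) :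
    |negMulLog a - negMulLog b| ≤ negMulLog |a - b| + |a - b| := by
  wlog hba : b ≤ a generalizing a b
  · rw [abs_sub_comm, abs_sub_comm a]
    exact this hb₀ hb₁ ha₀ ha₁ (le_of_not_ge hba)
  have key := abs_negMulLog_add_sub_le hb₀ (sub_nonneg.2 hba) (by linarith)
  rwa [add_sub_cancel, ← abs_of_nonneg (sub_nonneg.2 hba)] at key

end Real

lemma Finset.abs_sum_negMulLog_sub_le {ι : Type*} (F : Finset ι) {p q : ι → ℝ} {ε : ℝ}
    (hp : ∀ i, 0 ≤ p i ∧ p i ≤ 1) (hq : ∀ i, 0 ≤ q i ∧ q i ≤ 1) (hε : 0 < ε) (hε₁ : ε ≤ 1)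
    (hpq : ∑ i ∈ F, |p i - q i| ≤ ε) :
    |∑ i ∈ F, negMulLog (p i) - ∑ i ∈ F, negMulLog (q i)|
      ≤ ε * (1 + log (#F + 1)) + negMulLog ε := by
  have hN : (0 : ℝ) < #F + 1 := by positivity
  set c := ε / (#F + 1) with hc_def
  have hc : 0 < c := by positivity
  have hlogc : log c ≤ 0 := log_nonpos hc.le (div_le_one_of_le₀ (by linarith) hN.le)
  have hFc : #F * c ≤ ε := by
    rw [hc_def, mul_div_assoc']
    exact div_le_of_le_mul₀ hN.le hε.le (by linarith)
  calc |∑ i ∈ F, negMulLog (p i) - ∑ i ∈ F, negMulLog (q i)|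
      ≤ ∑ i ∈ F, |negMulLog (p i) - negMulLog (q i)| := by
        rw [← sum_sub_distrib]; exact abs_sum_le_sum_abs _ _
    _ ≤ ∑ i ∈ F, (c - |p i - q i| * log c) := by
        refine sum_le_sum fun i _ => ?_
        have h₁ := abs_negMulLog_sub_le (hp i).1 (hp i).2 (hq i).1 (hq i).2
        have h₂ := negMulLog_le_sub_sub_mul_log (abs_nonneg (p i - q i)) hc
        linarith
    _ = #F * c - (∑ i ∈ F, |p i - q i|) * log c := by
        rw [sum_sub_distrib, sum_const, nsmul_eq_mul, sum_mul]
    _ ≤ ε - ε * log c := by linarith [mul_le_mul_of_nonpos_right hpq hlogc]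
    _ = ε * (1 + log (#F + 1)) + negMulLog ε := by
        rw [hc_def, log_div hε.ne' hN.ne', negMulLog]; ring

structure IsEnergyBoundedDist (En : ℕ → ℝ) (E : ℝ) (p : ℕ → ℝ) : Prop where
  nonneg : ∀ n, 0 ≤ p n
  tsum_eq_one : ∑' n, p n = 1
  summable : Summable p
  summable_energy : Summable fun n => p n * En n
  energy_le : ∑' n, p n * En n ≤ E
  summable_negMulLog : Summable fun n => negMulLog (p n)

noncomputable def entropy (p : ℕ → ℝ) : ℝ := ∑' n, negMulLog (p n)

namespace IsEnergyBoundedDist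

variable {En : ℕ → ℝ} {E m : ℝ} {p : ℕ → ℝ}

lemma sum_le_one (hp : IsEnergyBoundedDist En E p) (F : Finset ℕ) : ∑ n ∈ F, p n ≤ 1 :=
  hp.tsum_eq_one ▸ hp.summable.sum_le_tsum F fun n _ => hp.nonneg n

lemma le_one (hp : IsEnergyBoundedDist En E p) (n : ℕ) : p n ≤ 1 := by
  simpa using hp.sum_le_one {n}

lemma tsum_compl_energy_le (hp : IsEnergyBoundedDist En E p) (hm₀ : m ≤ 0) (hm : ∀ n, m ≤ En n)
    (F : Finset ℕ) : ∑' n : {n // n ∉ F}, p n * En n ≤ E - m := by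
  have hsplit := hp.summable_energy.sum_add_tsum_subtype_compl F
  have hhead : m ≤ ∑ n ∈ F, p n * En n :=
    calc m ≤ m * ∑ n ∈ F, p n := by nlinarith [hp.sum_le_one F]
      _ = ∑ n ∈ F, p n * m := by rw [← sum_mul, mul_comm]
      _ ≤ ∑ n ∈ F, p n * En n :=
        sum_le_sum fun n _ => mul_le_mul_of_nonneg_left (hm n) (hp.nonneg n)
  linarith [hp.energy_le]

lemma tsum_compl_negMulLog_le (hp : IsEnergyBoundedDist En E p) (hm₀ : m ≤ 0) (hm : ∀ n, m ≤ En n)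
    {β : ℝ} (hβ : 0 ≤ β) (hZ : Summable fun n => exp (-β * En n)) (F : Finset ℕ) :
    ∑' n : {n // n ∉ F}, negMulLog (p n) ≤ ∑' n : {n // n ∉ F}, exp (-β * En n) + β * (E - m) := by
  have hpoint : ∀ n, negMulLog (p n) ≤ exp (-β * En n) + β * (p n * En n) := fun n => by
    have := negMulLog_le_sub_sub_mul_log (hp.nonneg n) (exp_pos (-β * En n))
    rw [log_exp] at this
    linarith [hp.nonneg n]
  have hZF : Summable fun n : {n // n ∉ F} => exp (-β * En n) := hZ.subtype _
  have hEF : Summable fun n : {n // n ∉ F} => β * (p n * En n) :=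
    (hp.summable_energy.subtype _).mul_left β
  calc ∑' n : {n // n ∉ F}, negMulLog (p n)
      ≤ ∑' n : {n // n ∉ F}, (exp (-β * En n) + β * (p n * En n)) :=
        (hp.summable_negMulLog.subtype _).tsum_le_tsum (fun n => hpoint n) (hZF.add hEF)
    _ = ∑' n : {n // n ∉ F}, exp (-β * En n) + β * ∑' n : {n // n ∉ F}, p n * En n := by
        rw [hZF.tsum_add hEF, tsum_mul_left]
    _ ≤ _ := by gcongr; exact hp.tsum_compl_energy_le hm₀ hm F

end IsEnergyBoundedDist

lemma exists_nonpos_forall_le_of_summable_exp_neg {ι : Type*} {En : ι → ℝ}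
    (h : Summable fun n => exp (-En n)) : ∃ m ≤ 0, ∀ n, m ≤ En n := by
  refine ⟨min (-log (∑' n, exp (-En n))) 0, min_le_right _ _, fun n => (min_le_left _ _).trans ?_⟩
  have := log_le_log (exp_pos _) (h.le_tsum n fun j _ => (exp_pos (-En j)).le)
  rw [log_exp] at this
  linarith

section EnergyBounded

variable {En : ℕ → ℝ} {E : ℝ}

lemma abs_entropy_sub_le {p q : ℕ → ℝ} (hp : IsEnergyBoundedDist En E p)
    (hq : IsEnergyBoundedDist En E q) {m : ℝ} (hm₀ : m ≤ 0) (hm : ∀ n, m ≤ En n) {β : ℝ}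
    (hβ : 0 ≤ β) (hZ : Summable fun n => exp (-β * En n)) (F : Finset ℕ) {ε : ℝ} (hε : 0 < ε)
    (hε₁ : ε ≤ 1) (hpq : ∑' n, |p n - q n| ≤ ε) :
    |entropy p - entropy q| ≤ ε * (1 + log (#F + 1)) + negMulLog ε
      + (∑' n : {n // n ∉ F}, exp (-β * En n) + β * (E - m)) := by
  have hhead := F.abs_sum_negMulLog_sub_le (fun n => ⟨hp.nonneg n, hp.le_one n⟩)
    (fun n => ⟨hq.nonneg n, hq.le_one n⟩) hε hε₁
    (((hp.summable.sub hq.summable).abs.sum_le_tsum F fun _ _ => abs_nonneg _).trans hpq)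
  have htail_p := hp.tsum_compl_negMulLog_le hm₀ hm hβ hZ F
  have htail_q := hq.tsum_compl_negMulLog_le hm₀ hm hβ hZ F
  have htail_q₀ : 0 ≤ ∑' n : {n // n ∉ F}, negMulLog (q n) :=
    tsum_nonneg fun n => negMulLog_nonneg (hq.nonneg n) (hq.le_one n)
  have htail_p₀ : 0 ≤ ∑' n : {n // n ∉ F}, negMulLog (p n) :=
    tsum_nonneg fun n => negMulLog_nonneg (hp.nonneg n) (hp.le_one n)
  rw [entropy, entropy, ← hp.summable_negMulLog.sum_add_tsum_subtype_compl F,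
    ← hq.summable_negMulLog.sum_add_tsum_subtype_compl F]
  rw [abs_le] at hhead ⊢
  constructor <;> linarith

theorem eventually_abs_entropy_sub_le
    (hGibbs : ∀ β : ℝ, 0 < β → Summable fun n => exp (-β * En n)) (E : ℝ) {η : ℝ} (hη : 0 < η) :
    ∀ᶠ ε in 𝓝[>] 0, ∀ p q, IsEnergyBoundedDist En E p → IsEnergyBoundedDist En E q →
      ∑' n, |p n - q n| ≤ ε → |entropy p - entropy q| ≤ η := by
  obtain ⟨m, hm₀, hm⟩ :=
    exists_nonpos_forall_le_of_summable_exp_neg (by simpa using hGibbs 1 one_pos)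
  have hη₃ : 0 < η / 3 := by positivity
  obtain ⟨β, hβE, hβ⟩ : ∃ β, β * (E - m) < η / 3 ∧ 0 < β := by
    have : Tendsto (fun β : ℝ => β * (E - m)) (𝓝[>] 0) (𝓝 0) := by
      simpa using ((continuous_mul_const (E - m)).tendsto 0).mono_left nhdsWithin_le_nhds
    exact ((this.eventually_lt_const hη₃).and self_mem_nhdsWithin).exists
  obtain ⟨F, hF⟩ := ((tendsto_tsum_compl_atTop_zero fun n => exp (-β * En n)).eventually_lt_const
    hη₃).exists
  have hhead : Tendsto (fun ε => ε * (1 + log (#F + 1)) + negMulLog ε) (𝓝[>] 0) (𝓝 0) := by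
    have : Continuous fun ε => ε * (1 + log (#F + 1)) + negMulLog ε := by fun_prop
    simpa using (this.tendsto 0).mono_left nhdsWithin_le_nhds
  filter_upwards [hhead.eventually_lt_const hη₃, Ioo_mem_nhdsGT one_pos]
    with ε hε_head hε p q hp hq hpq
  have := abs_entropy_sub_le hp hq hm₀ hm hβ.le (hGibbs β hβ) F hε.1 hε.2.le hpq
  linarith

-- `sSup` is `0` on empty and on unbounded sets of reals; this set is bounded above for `ε ≤ 1`.
noncomputable def entropyModulus (En : ℕ → ℝ) (E ε : ℝ) : ℝ :=
  sSup {x | ∃ p q, IsEnergyBoundedDist En E p ∧ IsEnergyBoundedDist En E q ∧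
    ∑' n, |p n - q n| ≤ ε ∧ |entropy p - entropy q| = x}

theorem tendsto_entropyModulus (hGibbs : ∀ β : ℝ, 0 < β → Summable fun n => exp (-β * En n))
    (E : ℝ) : Tendsto (entropyModulus En E) (𝓝[>] 0) (𝓝 0) := by
  refine tendsto_order.2 ⟨fun a ha => Eventually.of_forall fun ε => ha.trans_le ?_,
    fun a ha => ?_⟩
  · exact Real.sSup_nonneg <| by rintro _ ⟨p, q, -, -, -, rfl⟩; exact abs_nonneg _
  · filter_upwards [eventually_abs_entropy_sub_le hGibbs E (half_pos ha)] with ε hε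
    refine (Real.sSup_le ?_ (half_pos ha).le).trans_lt (half_lt_self ha)
    rintro _ ⟨p, q, hp, hq, hpq, rfl⟩
    exact hε p q hp hq hpq

lemma abs_entropy_sub_le_entropyModulus
    (hGibbs : ∀ β : ℝ, 0 < β → Summable fun n => exp (-β * En n)) {p q : ℕ → ℝ}
    (hp : IsEnergyBoundedDist En E p) (hq : IsEnergyBoundedDist En E q) {ε : ℝ} (hε : 0 < ε)
    (hε₁ : ε ≤ 1) (hpq : ∑' n, |p n - q n| ≤ ε) :
    |entropy p - entropy q| ≤ entropyModulus En E ε := by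
  obtain ⟨m, hm₀, hm⟩ :=
    exists_nonpos_forall_le_of_summable_exp_neg (by simpa using hGibbs 1 one_pos)
  refine le_csSup ⟨_, by
    rintro _ ⟨p', q', hp', hq', hpq', rfl⟩
    exact abs_entropy_sub_le hp' hq' hm₀ hm one_pos.le (hGibbs 1 one_pos) ∅ hε hε₁ hpq'⟩
    ⟨p, q, hp, hq, hpq, rfl⟩

end EnergyBounded

lemma neg_mul_logb_two (x : ℝ) : -(x * logb 2 x) = negMulLog x / log 2 := by
  rw [negMulLog, logb]; ring

lemma binH_eq_binEntropy_div (ε : ℝ) : binH ε = binEntropy ε / log 2 := by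
  rw [binH, binEntropy_eq_negMulLog_add_negMulLog_one_sub, negMulLog, negMulLog, logb, logb]
  ring

lemma tendsto_binH_nhdsGT_zero : Tendsto binH (𝓝[>] 0) (𝓝 0) := by
  rw [show binH = fun ε => binEntropy ε / log 2 from funext binH_eq_binEntropy_div]
  simpa using ((binEntropy_continuous.tendsto 0).div_const (log 2)).mono_left nhdsWithin_le_nhds

/-- Winter's continuity of entropy under an energy constraint, phrased for
states diagonal in the eigenbasis of the Hamiltonian `H̄` with eigenvalues `En`: if the
Gibbs hypothesis `tr(e^{−βH̄}) < ∞` holds for all `β > 0`, then for every `E > 0` there is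
`C` with `ε·C(ε) + h(ε) → 0` as `ε → 0⁺` such that any two energy-bounded states at trace
distance at most `ε` have entropies differing by at most `ε·C(ε) + h(ε)`. -/
theorem entropy_continuity_energy_constraint (En : ℕ → ℝ)
    (hGibbs : ∀ β : ℝ, 0 < β → Summable (fun n => Real.exp (-β * En n))) :
    ∀ E : ℝ, 0 < E → ∃ C : ℝ → ℝ,
      Filter.Tendsto (fun ε => ε * C ε + binH ε) (nhdsWithin 0 (Set.Ioi 0)) (nhds 0) ∧
      ∀ ε : ℝ, 0 < ε → ε < 1 → ∀ p q : ℕ → ℝ,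
        (∀ n, 0 ≤ p n) → (∀ n, 0 ≤ q n) →
        (∑' n, p n) = 1 → (∑' n, q n) = 1 →
        Summable p → Summable q →
        Summable (fun n => p n * En n) → Summable (fun n => q n * En n) →
        (∑' n, p n * En n) ≤ E → (∑' n, q n * En n) ≤ E →
        Summable (fun n => -(p n * Real.logb 2 (p n))) →
        Summable (fun n => -(q n * Real.logb 2 (q n))) →
        (∑' n, |p n - q n|) ≤ ε →
        |(∑' n, -(p n * Real.logb 2 (p n))) - (∑' n, -(q n * Real.logb 2 (q n)))|
          ≤ ε * C ε + binH ε := by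
  intro E _
  have hlog₂ : 0 < log 2 := log_pos one_lt_two
  refine ⟨fun ε => entropyModulus En E ε / (ε * log 2), ?_, ?_⟩
  · have hlim := ((tendsto_entropyModulus hGibbs E).div_const (log 2)).add
      tendsto_binH_nhdsGT_zero
    refine Tendsto.congr' ?_ (by simpa using hlim)
    filter_upwards [self_mem_nhdsWithin] with ε (hε : 0 < ε)
    field_simp
  · intro ε hε hε₁ p q hp₀ hq₀ hp₁ hq₁ hp hq hpE hqE hpE' hqE' hpS hqS hpq
    have hS : ∀ r : ℕ → ℝ, Summable (fun n => -(r n * logb 2 (r n))) →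
        Summable fun n => negMulLog (r n) := fun r hr =>
      (summable_div_const_iff hlog₂.ne').1 (by simpa only [neg_mul_logb_two] using hr)
    have hp : IsEnergyBoundedDist En E p := ⟨hp₀, hp₁, hp, hpE, hpE', hS p hpS⟩
    have hq : IsEnergyBoundedDist En E q := ⟨hq₀, hq₁, hq, hqE, hqE', hS q hqS⟩
    simp only [neg_mul_logb_two, tsum_div_const, ← sub_div, abs_div, abs_of_pos hlog₂]
    calc |entropy p - entropy q| / log 2 ≤ entropyModulus En E ε / log 2 := by
          gcongr; exact abs_entropy_sub_le_entropyModulus hGibbs hp hq hε hε₁.le hpq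
      _ = ε * (entropyModulus En E ε / (ε * log 2)) := by field_simp
      _ ≤ _ := le_add_of_nonneg_right <| by
          rw [binH_eq_binEntropy_div]; exact div_nonneg (binEntropy_nonneg hε.le hε₁.le) hlog₂.le
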